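/- Uniform Lojasiewicz inequality: let 0 ≠ f ∈ C_r^ω(𝕋,ℝ). Then there are constants δ = δ(f) > 0, S = S(f) > 0, b = b(f) > 0 such that for every g ∈ C_r^ω(𝕋,ℝ) with ‖g − f‖_r < δ, one has mes{x ∈ 𝕋 : |g(x)| < t} < S·t^{b} for all t > 0. -/

import Mathlib

open MeasureTheory Set Real

/-- The open annulus `A_r = {z ∈ ℂ : 1 - r < |z| < 1 + r}`, identifying `𝕋` with the unit
circle. -/
def annulus (r : ℝ) : Set ℂ := {z : ℂ | 1 - r < ‖z‖ ∧ ‖z‖ < 1 + r}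

/-- Membership of a function in `C_r^ω(𝕋, ℝ)`: a function on `𝕋` (viewed through its extension
`F` to the annulus) which is holomorphic in the open annulus `A_r`, continuous up to its
closure, and real-valued on the unit circle. -/
structure IsCrOmega (r : ℝ) (F : ℂ → ℂ) : Prop where
  holo : DifferentiableOn ℂ F (annulus r)
  cont : ContinuousOn F (closure (annulus r))
  real : ∀ x : ℝ, (F (Complex.exp (2 * π * Complex.I * x))).im = 0

/-!
Through `w ↦ exp (2πiw)` the functions become holomorphic on a horizontal strip around `ℝ`.
Since `u(x) = F(e^{2πix})` is real analytic and not identically zero, at every point some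
derivative of `u` is nonzero, so by compactness `[0, 1]` is covered by finitely many intervals,
on each of which `|u⁽ᵏ⁾| ≥ c` for some `k ≤ N`. Cauchy estimates on the strip show that these
lower bounds survive, halved, for every `G` that is `δ`-close to `F`, and van der Corput's
sublevel set lemma then bounds the measure of `{|G| < t}` on each interval by `O(t^{1/(N+1)})`.
-/

open Filter Topology

lemma sub_lt_of_mem_sublevel_of_le_abs_deriv {g g' : ℝ → ℝ} {I : Set ℝ} {c t : ℝ}
    (hI : I.OrdConnected) (hc : 0 < c) (hg : ∀ x ∈ I, HasDerivAt g (g' x) x)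
    (hg' : ∀ x ∈ I, c ≤ |g' x|) {p q : ℝ} (hp : p ∈ {x ∈ I | |g x| < t})
    (hq : q ∈ {x ∈ I | |g x| < t}) :
    q - p < 2 * (t / c) := by
  have ht : 0 < t := (abs_nonneg _).trans_lt hp.2
  rcases le_or_gt q p with hqp | hpq
  · have : 0 < 2 * (t / c) := by positivity
    linarith
  have hsub : Icc p q ⊆ I := hI.out hp.1 hq.1
  obtain ⟨ξ, hξ, hslope⟩ := exists_hasDerivAt_eq_slope g g' hpq
    (fun x hx => (hg x (hsub hx)).continuousAt.continuousWithinAt)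
    (fun x hx => hg x (hsub (Ioo_subset_Icc_self hx)))
  have hlow := hg' ξ (hsub (Ioo_subset_Icc_self hξ))
  rw [hslope, abs_div, abs_of_pos (sub_pos.2 hpq), le_div_iff₀ (sub_pos.2 hpq)] at hlow
  rw [← mul_div_assoc, lt_div_iff₀ hc]
  calc (q - p) * c = c * (q - p) := mul_comm _ _
    _ ≤ |g q - g p| := hlow
    _ ≤ |g q| + |g p| := abs_sub _ _
    _ < 2 * t := by linarith [hp.2, hq.2]

lemma exists_sublevel_subset_Ioo_of_le_abs_deriv {g g' : ℝ → ℝ} {I : Set ℝ} {c t : ℝ}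
    (hI : I.OrdConnected) (hc : 0 < c) (hg : ∀ x ∈ I, HasDerivAt g (g' x) x)
    (hg' : ∀ x ∈ I, c ≤ |g' x|) :
    ∃ l, {x ∈ I | |g x| < t} ⊆ Ioo l (l + 4 * (t / c)) := by
  rcases eq_empty_or_nonempty {x ∈ I | |g x| < t} with h | ⟨x₀, hx₀⟩
  · exact ⟨0, h ▸ empty_subset _⟩
  refine ⟨x₀ - 2 * (t / c), fun y hy => ⟨?_, ?_⟩⟩
  · linarith [sub_lt_of_mem_sublevel_of_le_abs_deriv hI hc hg hg' hy hx₀]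
  · linarith [sub_lt_of_mem_sublevel_of_le_abs_deriv hI hc hg hg' hx₀ hy]

lemma ContDiff.hasDerivAt_iteratedDeriv {𝕜 F : Type*} [NontriviallyNormedField 𝕜]
    [NormedAddCommGroup F] [NormedSpace 𝕜 F] {g : 𝕜 → F} {n : ℕ} (hg : ContDiff 𝕜 n g)
    {j : ℕ} (hj : j < n) (x : 𝕜) :
    HasDerivAt (iteratedDeriv j g) (iteratedDeriv (j + 1) g x) x := by
  rw [iteratedDeriv_succ]
  exact ((hg.differentiable_iteratedDeriv j (by exact_mod_cast hj)).differentiableAt).hasDerivAt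

/-- Van der Corput's sublevel set estimate. -/
theorem volume_sublevel_le_of_le_abs_iteratedDeriv {g : ℝ → ℝ} {I : Set ℝ} (hI : I.OrdConnected)
    {k : ℕ} (hk : 1 ≤ k) (hg : ContDiff ℝ k g) {c t : ℝ} (hc : 0 < c) (ht : 0 < t)
    (hlow : ∀ x ∈ I, c ≤ |iteratedDeriv k g x|) :
    volume {x ∈ I | |g x| < t} ≤ ENNReal.ofReal (4 ^ k * (t / c) ^ (k⁻¹ : ℝ)) := by
  induction k, hk using Nat.le_induction generalizing I c with
  | base =>
    have hg' : ∀ x ∈ I, HasDerivAt g (iteratedDeriv 1 g x) x := fun x _ => by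
      simpa using hg.hasDerivAt_iteratedDeriv zero_lt_one x
    obtain ⟨l, hl⟩ := exists_sublevel_subset_Ioo_of_le_abs_deriv hI hc hg' hlow
    calc volume {x ∈ I | |g x| < t} ≤ volume (Ioo l (l + 4 * (t / c))) := measure_mono hl
      _ = ENNReal.ofReal (4 ^ 1 * (t / c) ^ ((1 : ℕ)⁻¹ : ℝ)) := by
        rw [Real.volume_Ioo, add_sub_cancel_left]; norm_num
  | succ k hk ih =>
    -- `X` balances the two contributions: `|g⁽ᵏ⁾| < c X` only on an interval of length `4 X`,
    -- and off it the case `k` with constant `c X` gives `4 ^ k X` on each side.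
    set X : ℝ := (t / c) ^ (((k + 1 : ℕ) : ℝ)⁻¹)
    have hX0 : 0 < X := by positivity
    have hXpow : X ^ (k + 1) = t / c := Real.rpow_inv_natCast_pow (by positivity) (by omega)
    have hs : 0 < c * X := mul_pos hc hX0
    obtain ⟨l, hl⟩ := exists_sublevel_subset_Ioo_of_le_abs_deriv (t := c * X) hI hc
      (fun x _ => hg.hasDerivAt_iteratedDeriv (Nat.lt_succ_self k) x) hlow
    rw [mul_div_cancel_left₀ _ hc.ne'] at hl
    have hbig : ∀ x ∈ I, x ∉ Ioo l (l + 4 * X) → c * X ≤ |iteratedDeriv k g x| :=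
      fun x hx hxJ => not_lt.1 fun hlt => hxJ (hl ⟨hx, hlt⟩)
    have hpiece : ∀ J ⊆ I, J.OrdConnected → Disjoint J (Ioo l (l + 4 * X)) →
        volume {x ∈ J | |g x| < t} ≤ ENNReal.ofReal (4 ^ k * X) := by
      intro J hJI hJ hdisj
      refine (ih hJ (hg.of_le (by norm_cast; omega)) hs fun x hx =>
        hbig x (hJI hx) (disjoint_left.1 hdisj hx)).trans_eq ?_
      have : t / (c * X) = X ^ k := by
        rw [← div_div, ← hXpow, pow_succ, mul_div_cancel_right₀ _ hX0.ne']
      rw [this, Real.pow_rpow_inv_natCast hX0.le (by omega)]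
    have hcover : {x ∈ I | |g x| < t} ⊆ Ioo l (l + 4 * X) ∪
        ({x ∈ I ∩ Iic l | |g x| < t} ∪ {x ∈ I ∩ Ici (l + 4 * X) | |g x| < t}) := by
      rintro x ⟨hxI, hxt⟩
      by_cases hxl : x ≤ l
      · exact Or.inr (Or.inl ⟨⟨hxI, hxl⟩, hxt⟩)
      by_cases hxr : l + 4 * X ≤ x
      · exact Or.inr (Or.inr ⟨⟨hxI, hxr⟩, hxt⟩)
      exact Or.inl ⟨not_le.1 hxl, not_le.1 hxr⟩
    have hleft := hpiece _ inter_subset_left (hI.inter ordConnected_Iic)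
      (disjoint_left.2 fun x hx hx' => (not_lt.2 hx.2) hx'.1)
    have hright := hpiece _ inter_subset_left (hI.inter ordConnected_Ici)
      (disjoint_left.2 fun x hx hx' => (not_lt.2 hx.2) hx'.2)
    calc volume {x ∈ I | |g x| < t}
        ≤ volume (Ioo l (l + 4 * X)) + (volume {x ∈ I ∩ Iic l | |g x| < t} +
            volume {x ∈ I ∩ Ici (l + 4 * X) | |g x| < t}) :=
          (measure_mono hcover).trans <|
            (measure_union_le _ _).trans (add_le_add_right (measure_union_le _ _) _)
      _ ≤ ENNReal.ofReal (4 * X) + (ENNReal.ofReal (4 ^ k * X) + ENNReal.ofReal (4 ^ k * X)) := by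
          rw [Real.volume_Ioo, add_sub_cancel_left]
          gcongr
      _ ≤ ENNReal.ofReal (4 ^ (k + 1) * X) := by
          rw [← ENNReal.ofReal_add (by positivity) (by positivity),
            ← ENNReal.ofReal_add (by positivity) (by positivity)]
          refine ENNReal.ofReal_le_ofReal ?_
          have : (4 : ℝ) ≤ 4 ^ k := le_self_pow₀ (by norm_num) (by omega)
          rw [pow_succ]
          nlinarith

theorem volume_sublevel_le_of_le_abs_iteratedDeriv_of_lt {g : ℝ → ℝ} {I : Set ℝ}
    (hI : I.OrdConnected) {k N : ℕ} (hkN : k < N) (hg : ContDiff ℝ N g) {c t : ℝ} (hc : 0 < c)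
    (ht : 0 < t) (htc : t ≤ c) (hlow : ∀ x ∈ I, c ≤ |iteratedDeriv k g x|) :
    volume {x ∈ I | |g x| < t} ≤ ENNReal.ofReal (4 ^ N * (t / c) ^ (N⁻¹ : ℝ)) := by
  rcases Nat.eq_zero_or_pos k with rfl | hk
  · have : {x ∈ I | |g x| < t} = ∅ :=
      eq_empty_of_forall_notMem fun x hx => by
        linarith [hx.2, iteratedDeriv_zero (f := g) ▸ hlow x hx.1]
    simp [this]
  refine (volume_sublevel_le_of_le_abs_iteratedDeriv hI hk (hg.of_le (by exact_mod_cast hkN.le))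
    hc ht hlow).trans (ENNReal.ofReal_le_ofReal ?_)
  have htc0 : 0 < t / c := div_pos ht hc
  gcongr ?_ * ?_
  · exact pow_le_pow_right₀ (by norm_num) hkN.le
  · exact Real.rpow_le_rpow_of_exponent_ge htc0 ((div_le_one hc).2 htc)
      (inv_anti₀ (Nat.cast_pos.2 hk) (Nat.cast_le.2 hkN.le))

theorem AnalyticOnNhd.exists_iteratedDeriv_ne_zero {𝕜 E : Type*} [NontriviallyNormedField 𝕜]
    [CharZero 𝕜] [NormedAddCommGroup E] [NormedSpace 𝕜 E] [CompleteSpace E] {f : 𝕜 → E}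
    {U : Set 𝕜} (hf : AnalyticOnNhd 𝕜 f U) (hU : IsPreconnected U) {x y : 𝕜} (hx : x ∈ U)
    (hy : y ∈ U) (hfy : f y ≠ 0) :
    ∃ k, iteratedDeriv k f x ≠ 0 := by
  by_contra! hzero
  have htop : analyticOrderAt f x = ⊤ := ENat.eq_top_iff_forall_ge.2 fun n =>
    (natCast_le_analyticOrderAt_iff_iteratedDeriv_eq_zero (hf x hx)).2 fun i _ => hzero i
  exact hfy (hf.eqOn_zero_of_preconnected_of_eventuallyEq_zero hU hx
    (analyticOrderAt_eq_top.1 htop) hy)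

theorem IsCompact.exists_finite_cover_le_abs {K : Set ℝ} (hK : IsCompact K) {D : ℕ → ℝ → ℝ}
    (hD : ∀ k, Continuous (D k)) (h : ∀ x ∈ K, ∃ k, D k x ≠ 0) :
    ∃ (N : ℕ) (c : ℝ), 0 < c ∧ ∃ s : Finset (Set ℝ), K ⊆ ⋃ I ∈ s, I ∧
      ∀ I ∈ s, I.OrdConnected ∧ ∃ k ≤ N, ∀ x ∈ I, c ≤ |D k x| := by
  have hloc : ∀ x ∈ K, ∃ k ε, 0 < ε ∧ 0 < |D k x| ∧
      ∀ y ∈ Metric.ball x ε, |D k x| / 2 ≤ |D k y| := by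
    intro x hx
    obtain ⟨k, hk⟩ := h x hx
    have hpos : 0 < |D k x| := abs_pos.2 hk
    obtain ⟨ε, hε, hball⟩ := Metric.isOpen_iff.1
      (isOpen_lt continuous_const (hD k).abs) x (half_lt_self hpos)
    exact ⟨k, ε, hε, hpos, fun y hy => (hball hy).le⟩
  choose! k ε hε hpos hball using hloc
  obtain ⟨t, htK, hKt⟩ := hK.elim_nhds_subcover (fun x => Metric.ball x (ε x))
    (fun x hx => Metric.ball_mem_nhds x (hε x hx))
  obtain ⟨c, hct, hc⟩ := ((eventually_all_finset t).2 fun x hx =>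
    nhdsWithin_le_nhds (eventually_le_nhds (half_pos (hpos x (htK x hx))))).and
      (self_mem_nhdsWithin (s := Ioi (0 : ℝ))) |>.exists
  refine ⟨t.sup k, c, hc, t.image fun x => Metric.ball x (ε x), ?_, ?_⟩
  · simpa only [Finset.set_biUnion_finset_image] using hKt
  simp only [Finset.mem_image, forall_exists_index, and_imp, forall_apply_eq_imp_iff₂]
  intro x hx
  refine ⟨Real.ball_eq_Ioo x (ε x) ▸ ordConnected_Ioo, k x, Finset.le_sup hx,
    fun y hy => (hct x hx).trans (hball x (htK x hx) y hy)⟩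

def strip (h : ℝ) : Set ℂ := Complex.im ⁻¹' Ioo (-h) h

lemma isOpen_strip (h : ℝ) : IsOpen (strip h) := isOpen_Ioo.preimage Complex.continuous_im

lemma closedBall_ofReal_subset_strip {ρ h : ℝ} (hρh : ρ < h) (x : ℝ) :
    Metric.closedBall (x : ℂ) ρ ⊆ strip h := by
  intro z hz
  have : |z.im| < h := calc
    |z.im| = |(z - x).im| := by simp
    _ ≤ ‖z - x‖ := Complex.abs_im_le_norm _
    _ < h := (mem_closedBall_iff_norm.1 hz).trans_lt hρh
  exact abs_lt.1 this

lemma ofReal_mem_strip {h : ℝ} (hh : 0 < h) (x : ℝ) : (x : ℂ) ∈ strip h :=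
  closedBall_ofReal_subset_strip hh x (Metric.mem_closedBall_self le_rfl)

lemma exists_mapsTo_strip_annulus {r : ℝ} (hr : 0 < r) :
    ∃ h > 0, MapsTo (fun w : ℂ => Complex.exp (2 * π * Complex.I * w)) (strip h) (annulus r) := by
  have hev : ∀ᶠ y in 𝓝 (0 : ℝ), Real.exp (-(2 * π * y)) ∈ Ioo (1 - r) (1 + r) :=
    (by fun_prop : Continuous fun y : ℝ => Real.exp (-(2 * π * y))).continuousAt.preimage_mem_nhds
      (Ioo_mem_nhds (by simp [hr]) (by simp [hr]))
  obtain ⟨h, hh, hball⟩ := Metric.eventually_nhds_iff.1 hev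
  refine ⟨h, hh, fun w hw => ?_⟩
  have hnorm : ‖Complex.exp (2 * π * Complex.I * w)‖ = Real.exp (-(2 * π * w.im)) := by
    simp [Complex.norm_exp]
  have hw' : -h < w.im ∧ w.im < h := hw
  rw [annulus, mem_ofPred_eq, hnorm]
  exact hball (by simpa [Real.dist_eq, abs_lt] using hw')

lemma AnalyticAt.re_comp_ofReal {f : ℂ → ℂ} {x : ℝ} (hf : AnalyticAt ℂ f x) :
    AnalyticAt ℝ (fun y : ℝ => (f y).re) x :=
  Complex.reCLM.analyticAt _ |>.comp (hf.restrictScalars.comp (Complex.ofRealCLM.analyticAt x))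

lemma iteratedDeriv_re_comp_ofReal {f : ℂ → ℂ} (hf : ∀ x : ℝ, AnalyticAt ℂ f x) (k : ℕ) :
    iteratedDeriv k (fun x : ℝ => (f x).re) = fun x : ℝ => (iteratedDeriv k f x).re := by
  induction k with
  | zero => simp
  | succ k ih =>
    rw [iteratedDeriv_succ, ih]
    funext x
    rw [iteratedDeriv_succ, iteratedDeriv_eq_iterate]
    exact ((hf x).iterated_deriv k).differentiableAt.hasDerivAt.real_of_complex.deriv

lemma norm_iteratedDeriv_le_of_forall_mem_strip_norm_le {Φ : ℂ → ℂ} {h ρ δ : ℝ}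
    (hΦ : DifferentiableOn ℂ Φ (strip h)) (hΦδ : ∀ w ∈ strip h, ‖Φ w‖ ≤ δ) (hρ : 0 < ρ)
    (hρh : ρ < h) (k : ℕ) (x : ℝ) :
    ‖iteratedDeriv k Φ x‖ ≤ k.factorial * δ / ρ ^ k :=
  Complex.norm_iteratedDeriv_le_of_forall_mem_sphere_norm_le k hρ
    (hΦ.diffContOnCl_ball (closedBall_ofReal_subset_strip hρh x))
    fun z hz => hΦδ z (closedBall_ofReal_subset_strip hρh x (Metric.sphere_subset_closedBall hz))

lemma abs_iteratedDeriv_re_sub_le {Ψ Ψ' : ℂ → ℂ} {h ρ δ : ℝ}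
    (hΨ : DifferentiableOn ℂ Ψ (strip h)) (hΨ' : DifferentiableOn ℂ Ψ' (strip h))
    (hδ : ∀ w ∈ strip h, ‖Ψ' w - Ψ w‖ ≤ δ) (hρ : 0 < ρ) (hρh : ρ < h) (k : ℕ) (x : ℝ) :
    |iteratedDeriv k (fun y : ℝ => (Ψ' y).re) x - iteratedDeriv k (fun y : ℝ => (Ψ y).re) x|
      ≤ k.factorial * δ / ρ ^ k := by
  have hreal : ∀ y : ℝ, (y : ℂ) ∈ strip h := ofReal_mem_strip (hρ.trans hρh)
  have hA := fun y => hΨ.analyticAt (isOpen_strip h |>.mem_nhds (hreal y))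
  have hA' := fun y => hΨ'.analyticAt (isOpen_strip h |>.mem_nhds (hreal y))
  rw [iteratedDeriv_re_comp_ofReal hA, iteratedDeriv_re_comp_ofReal hA', ← Complex.sub_re,
    ← iteratedDeriv_sub (hA' x).contDiffAt (hA x).contDiffAt]
  exact (Complex.abs_re_le_norm _).trans
    (norm_iteratedDeriv_le_of_forall_mem_strip_norm_le (hΨ'.sub hΨ) hδ hρ hρh k x)

theorem volume_sublevel_le_of_finite_cover {g : ℝ → ℝ} {N : ℕ} (hg : ContDiff ℝ (N + 1) g)
    {K : Set ℝ} {s : Finset (Set ℝ)} (hKs : K ⊆ ⋃ I ∈ s, I) {c t : ℝ} (hc : 0 < c)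
    (hs : ∀ I ∈ s, I.OrdConnected ∧ ∃ k ≤ N, ∀ x ∈ I, c ≤ |iteratedDeriv k g x|)
    (ht : 0 < t) (htc : t ≤ c) :
    volume {x ∈ K | |g x| < t} ≤
      ENNReal.ofReal (s.card * 4 ^ (N + 1) * (t / c) ^ (((N + 1 : ℕ) : ℝ)⁻¹)) := by
  have hsub : {x ∈ K | |g x| < t} ⊆ ⋃ I ∈ s, {x ∈ I | |g x| < t} := by
    rintro x ⟨hxK, hxt⟩
    obtain ⟨I, hI, hxI⟩ := mem_iUnion₂.1 (hKs hxK)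
    exact mem_iUnion₂.2 ⟨I, hI, hxI, hxt⟩
  calc volume {x ∈ K | |g x| < t}
      ≤ ∑ I ∈ s, volume {x ∈ I | |g x| < t} :=
        (measure_mono hsub).trans (measure_biUnion_finset_le _ _)
    _ ≤ ∑ _I ∈ s, ENNReal.ofReal (4 ^ (N + 1) * (t / c) ^ (((N + 1 : ℕ) : ℝ)⁻¹)) := by
        refine Finset.sum_le_sum fun I hI => ?_
        obtain ⟨hIc, k, hkN, hlow⟩ := hs I hI
        exact volume_sublevel_le_of_le_abs_iteratedDeriv_of_lt hIc (Nat.lt_succ_of_le hkN)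
          (by exact_mod_cast hg) hc ht htc hlow
    _ = ENNReal.ofReal (s.card * 4 ^ (N + 1) * (t / c) ^ (((N + 1 : ℕ) : ℝ)⁻¹)) := by
        rw [Finset.sum_const, nsmul_eq_mul, ← ENNReal.ofReal_natCast,
          ← ENNReal.ofReal_mul (Nat.cast_nonneg _), mul_assoc]

lemma lt_ofReal_mul_rpow_of_le {m : ENNReal} {M V c b t : ℝ} (hM : 0 ≤ M) (hV : 0 ≤ V)
    (hc : 0 < c) (ht : 0 < t) (hb : 0 < b) (hsmall : t ≤ c → m ≤ ENNReal.ofReal (M * (t / c) ^ b))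
    (hbdd : m ≤ ENNReal.ofReal V) :
    m < ENNReal.ofReal ((M + V + 1) / c ^ b * t ^ b) := by
  have hrw : (M + V + 1) / c ^ b * t ^ b = (M + V + 1) * (t / c) ^ b := by
    rw [Real.div_rpow ht.le hc.le]; ring
  have hpos : 0 < (t / c) ^ b := by positivity
  rw [hrw]
  rcases le_or_gt t c with htc | hct
  · refine (hsmall htc).trans_lt ((ENNReal.ofReal_lt_ofReal_iff (by positivity)).2 ?_)
    nlinarith
  · have hone : 1 ≤ (t / c) ^ b := Real.one_le_rpow ((one_le_div hc).2 hct.le) hb.le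
    refine hbdd.trans_lt ((ENNReal.ofReal_lt_ofReal_iff (by positivity)).2 ?_)
    nlinarith

lemma DifferentiableOn.analyticOnNhd_re_comp_ofReal {Ψ : ℂ → ℂ} {h : ℝ} (hh : 0 < h)
    (hΨ : DifferentiableOn ℂ Ψ (strip h)) :
    AnalyticOnNhd ℝ (fun x : ℝ => (Ψ x).re) univ := fun x _ =>
  (hΨ.analyticAt ((isOpen_strip h).mem_nhds (ofReal_mem_strip hh x))).re_comp_ofReal

theorem exists_forall_volume_sublevel_lt {h : ℝ} (hh : 0 < h) {Ψ : ℂ → ℂ}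
    (hΨ : DifferentiableOn ℂ Ψ (strip h)) {x₀ : ℝ} (hx₀ : (Ψ x₀).re ≠ 0) {K : Set ℝ}
    (hK : IsCompact K) :
    ∃ δ > (0 : ℝ), ∃ S > (0 : ℝ), ∃ b > (0 : ℝ), ∀ Ψ' : ℂ → ℂ, DifferentiableOn ℂ Ψ' (strip h) →
      (∀ w ∈ strip h, ‖Ψ' w - Ψ w‖ < δ) →
        ∀ t, 0 < t → volume {x ∈ K | ‖Ψ' x‖ < t} < ENNReal.ofReal (S * t ^ b) := by
  have hu := hΨ.analyticOnNhd_re_comp_ofReal hh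
  obtain ⟨N, c, hc, s, hKs, hs⟩ := hK.exists_finite_cover_le_abs
    (fun k => (hu.contDiff (n := k)).continuous_iteratedDeriv' k)
    fun x _ => hu.exists_iteratedDeriv_ne_zero isPreconnected_univ (mem_univ x) (mem_univ x₀) hx₀
  -- Cauchy estimates on discs of radius `ρ` keep the first `N` derivatives within `c / 2`.
  set ρ := min (h / 2) 1
  have hρ : 0 < ρ := lt_min (half_pos hh) one_pos
  set δ := c / 2 * ρ ^ N / N.factorial with hδ_def
  have hδ : ∀ k ≤ N, k.factorial * δ / ρ ^ k ≤ c / 2 := fun k hk => by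
    rw [div_le_iff₀ (by positivity)]
    calc k.factorial * δ ≤ N.factorial * δ := by gcongr
      _ = c / 2 * ρ ^ N := by rw [hδ_def]; field_simp
      _ ≤ c / 2 * ρ ^ k := mul_le_mul_of_nonneg_left
          (pow_le_pow_of_le_one hρ.le (min_le_right _ _) hk) (by positivity)
  set V := (volume K).toReal
  set b : ℝ := ((N + 1 : ℕ) : ℝ)⁻¹
  refine ⟨δ, by positivity, (s.card * 4 ^ (N + 1) + V + 1) / (c / 2) ^ b, by positivity, b,
    by positivity, fun Ψ' hΨ' hclose t ht => ?_⟩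
  have hu' := hΨ'.analyticOnNhd_re_comp_ofReal hh
  have hs' : ∀ I ∈ s, I.OrdConnected ∧
      ∃ k ≤ N, ∀ x ∈ I, c / 2 ≤ |iteratedDeriv k (fun x : ℝ => (Ψ' x).re) x| := by
    intro I hI
    obtain ⟨hIc, k, hkN, hlow⟩ := hs I hI
    refine ⟨hIc, k, hkN, fun x hx => ?_⟩
    have hdiff := (abs_iteratedDeriv_re_sub_le hΨ hΨ' (fun w hw => (hclose w hw).le) hρ
      ((min_le_left _ _).trans_lt (half_lt_self hh)) k x).trans (hδ k hkN)
    rw [abs_sub_comm] at hdiff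
    linarith [hlow x hx, abs_sub_abs_le_abs_sub (iteratedDeriv k (fun x : ℝ => (Ψ x).re) x)
      (iteratedDeriv k (fun x : ℝ => (Ψ' x).re) x)]
  have hsub : {x ∈ K | ‖Ψ' x‖ < t} ⊆ {x ∈ K | |(Ψ' x).re| < t} :=
    fun x hx => ⟨hx.1, (Complex.abs_re_le_norm _).trans_lt hx.2⟩
  refine lt_ofReal_mul_rpow_of_le (by positivity) ENNReal.toReal_nonneg (half_pos hc) ht
    (by positivity) (fun htc => (measure_mono hsub).trans ?_) ?_
  · exact volume_sublevel_le_of_finite_cover hu'.contDiff hKs (half_pos hc) hs' ht htc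
  · exact (measure_mono (sep_subset _ _)).trans (ENNReal.ofReal_toReal hK.measure_lt_top.ne).ge

/-- **Uniform Łojasiewicz inequality** (Duarte–Klein, Lemma 6.1).
Let `0 ≠ f ∈ C_r^ω(𝕋,ℝ)`.  Then there are constants `δ = δ(f) > 0`, `S = S(f) > 0`,
`b = b(f) > 0` such that for every `g ∈ C_r^ω(𝕋,ℝ)` with `‖g - f‖_r < δ` (i.e. `|g z - f z| < δ`
throughout the annulus `A_r`), one has `mes {x ∈ 𝕋 : |g x| < t} < S·t^b` for all `t > 0`. -/
theorem statement5 (r : ℝ) (hr : 0 < r)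
    (F : ℂ → ℂ) (hF : IsCrOmega r F)
    (hF0 : ∃ x : ℝ, F (Complex.exp (2 * π * Complex.I * x)) ≠ 0) :
    ∃ δ > (0 : ℝ), ∃ S > (0 : ℝ), ∃ b > (0 : ℝ),
      ∀ G : ℂ → ℂ, IsCrOmega r G →
        (∀ z ∈ annulus r, ‖G z - F z‖ < δ) →
        ∀ t : ℝ, 0 < t →
          volume {x ∈ Ico (0 : ℝ) 1 | ‖G (Complex.exp (2 * π * Complex.I * x))‖ < t} <
            ENNReal.ofReal (S * t ^ b) := by
  obtain ⟨h, hh, hmaps⟩ := exists_mapsTo_strip_annulus hr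
  have hlift : ∀ G : ℂ → ℂ, IsCrOmega r G →
      DifferentiableOn ℂ (fun w => G (Complex.exp (2 * π * Complex.I * w))) (strip h) :=
    fun G hG => hG.holo.comp (by fun_prop) hmaps
  obtain ⟨x₀, hx₀⟩ := hF0
  have hre : (F (Complex.exp (2 * π * Complex.I * x₀))).re ≠ 0 := fun h0 =>
    hx₀ (Complex.ext h0 (hF.real x₀))
  obtain ⟨δ, hδ, S, hS, b, hb, hbound⟩ :=
    exists_forall_volume_sublevel_lt (K := Icc 0 1) hh (hlift F hF) hre isCompact_Icc
  refine ⟨δ, hδ, S, hS, b, hb, fun G hG hclose t ht => ?_⟩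
  exact (measure_mono (inter_subset_inter_left _ Ico_subset_Icc_self)).trans_lt
    (hbound _ (hlift G hG) (fun w hw => hclose _ (hmaps hw)) t ht)
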